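/- Let F be continuous on [a,b] and differentiable on (a,b), with least concave majorant F̂. Let M = max F, D = {x : F(x) = M}, and C = [c1,c2] the smallest closed interval containing D. If y ∈ (a,c1) and F'(y) ≤ 0, then F(y) ≠ F̂(y); likewise, if y ∈ (c2,b) and F'(y) ≥ 0, then F(y) ≠ F̂(y). -/

import Mathlib

/-!
If `F` touches its least concave majorant `F̂` at `y`, then every left difference quotient of `F`
at `y` dominates the corresponding one of `F̂`, which by concavity dominates the slope of `F̂` from
`y` to any `d > y`. For `y < c₁` take `d ∈ D`: then `F̂(d) = M > F(y) = F̂(y)`, so that slope is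
positive and hence `F'(y) > 0`. The case `y > c₂` is symmetric, with right difference quotients.
-/

open Set

/-- The least concave majorant of `F` on `[a, b]`. -/
noncomputable def leastConcaveMajorant (a b : ℝ) (F : ℝ → ℝ) (x : ℝ) : ℝ :=
  sInf {y : ℝ | ∃ G : ℝ → ℝ, ConcaveOn ℝ (Set.Icc a b) G ∧
    (∀ z ∈ Set.Icc a b, F z ≤ G z) ∧ y = G x}

open Filter Topology

section Touching

variable {s : Set ℝ} {F G : ℝ → ℝ} {y d f' : ℝ}

theorem ConcaveOn.slope_le_of_hasDerivWithinAt_Iio_of_le (hG : ConcaveOn ℝ s G)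
    (hFG : ∀ x ∈ s, F x ≤ G x) (hFy : F y = G y) (hy : y ∈ s) (hd : d ∈ s) (hyd : y < d)
    (hs : s ∈ 𝓝[<] y) (hF : HasDerivWithinAt F f' (Iio y) y) : slope G y d ≤ f' := by
  refine ge_of_tendsto ((hasDerivWithinAt_iff_tendsto_slope' self_notMem_Iio).mp hF) ?_
  filter_upwards [hs, self_mem_nhdsWithin] with t hts (hty : t < y)
  calc slope G y d ≤ slope G y t :=
        hG.slope_anti hy ⟨hts, hty.ne⟩ ⟨hd, hyd.ne'⟩ (hty.trans hyd).le
    _ ≤ slope F y t := by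
        rw [slope_def_field, slope_def_field, hFy]
        exact div_le_div_of_nonpos_of_le (by linarith) (by linarith [hFG t hts])

theorem ConcaveOn.le_slope_of_hasDerivWithinAt_Ioi_of_le (hG : ConcaveOn ℝ s G)
    (hFG : ∀ x ∈ s, F x ≤ G x) (hFy : F y = G y) (hy : y ∈ s) (hd : d ∈ s) (hdy : d < y)
    (hs : s ∈ 𝓝[>] y) (hF : HasDerivWithinAt F f' (Ioi y) y) : f' ≤ slope G y d := by
  refine le_of_tendsto ((hasDerivWithinAt_iff_tendsto_slope' self_notMem_Ioi).mp hF) ?_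
  filter_upwards [hs, self_mem_nhdsWithin] with t hts (hyt : y < t)
  calc slope F y t ≤ slope G y t := by
        rw [slope_def_field, slope_def_field, hFy]
        exact div_le_div_of_nonneg_right (by linarith [hFG t hts]) (by linarith)
    _ ≤ slope G y d :=
        hG.slope_anti hy ⟨hd, hdy.ne⟩ ⟨hts, hyt.ne'⟩ (hdy.trans hyt).le

end Touching

section LeastConcaveMajorant

variable {a b M x : ℝ} {F G : ℝ → ℝ}

theorem leastConcaveMajorant_le (hG : ConcaveOn ℝ (Icc a b) G)
    (hFG : ∀ z ∈ Icc a b, F z ≤ G z) (hx : x ∈ Icc a b) :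
    leastConcaveMajorant a b F x ≤ G x :=
  csInf_le ⟨F x, by rintro _ ⟨G', -, hFG', rfl⟩; exact hFG' x hx⟩ ⟨G, hG, hFG, rfl⟩

theorem le_leastConcaveMajorant (hM : ∀ z ∈ Icc a b, F z ≤ M) (hx : x ∈ Icc a b) :
    F x ≤ leastConcaveMajorant a b F x := by
  refine le_csInf ⟨M, fun _ => M, concaveOn_const M (convex_Icc a b), hM, rfl⟩ ?_
  rintro _ ⟨G, -, hFG, rfl⟩
  exact hFG x hx

theorem concaveOn_leastConcaveMajorant (hM : ∀ z ∈ Icc a b, F z ≤ M) :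
    ConcaveOn ℝ (Icc a b) (leastConcaveMajorant a b F) := by
  refine ⟨convex_Icc a b, fun x hx z hz u v hu hv huv => ?_⟩
  refine le_csInf ⟨M, fun _ => M, concaveOn_const M (convex_Icc a b), hM, rfl⟩ ?_
  rintro _ ⟨G, hG, hFG, rfl⟩
  calc u • leastConcaveMajorant a b F x + v • leastConcaveMajorant a b F z
      ≤ u • G x + v • G z := by
        gcongr
        exacts [leastConcaveMajorant_le hG hFG hx, leastConcaveMajorant_le hG hFG hz]
    _ ≤ G (u • x + v • z) := hG.2 hx hz hu hv huv

theorem leastConcaveMajorant_eq_of_eq_max (hM : ∀ z ∈ Icc a b, F z ≤ M) (hx : x ∈ Icc a b)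
    (hFx : F x = M) : leastConcaveMajorant a b F x = M :=
  le_antisymm (leastConcaveMajorant_le (concaveOn_const M (convex_Icc a b)) hM hx)
    (hFx ▸ le_leastConcaveMajorant hM hx)

theorem deriv_pos_of_eq_leastConcaveMajorant {d y : ℝ} (hM : ∀ z ∈ Icc a b, F z ≤ M)
    (hd : d ∈ Icc a b) (hFd : F d = M) (hy : y ∈ Ioo a d) (hFy : F y < M)
    (hF : DifferentiableAt ℝ F y) (hFL : F y = leastConcaveMajorant a b F y) : 0 < deriv F y := by
  have hy' : y ∈ Icc a b := ⟨hy.1.le, hy.2.le.trans hd.2⟩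
  calc 0 < slope (leastConcaveMajorant a b F) y d := by
        rw [slope_def_field, leastConcaveMajorant_eq_of_eq_max hM hd hFd, ← hFL]
        exact div_pos (by linarith) (by linarith [hy.2])
    _ ≤ deriv F y :=
        (concaveOn_leastConcaveMajorant hM).slope_le_of_hasDerivWithinAt_Iio_of_le
          (fun _ => le_leastConcaveMajorant hM) hFL hy' hd hy.2
          (Icc_mem_nhdsLT_of_mem ⟨hy.1, hy'.2⟩) hF.hasDerivAt.hasDerivWithinAt

theorem deriv_neg_of_eq_leastConcaveMajorant {d y : ℝ} (hM : ∀ z ∈ Icc a b, F z ≤ M)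
    (hd : d ∈ Icc a b) (hFd : F d = M) (hy : y ∈ Ioo d b) (hFy : F y < M)
    (hF : DifferentiableAt ℝ F y) (hFL : F y = leastConcaveMajorant a b F y) : deriv F y < 0 := by
  have hy' : y ∈ Icc a b := ⟨hd.1.trans hy.1.le, hy.2.le⟩
  calc deriv F y ≤ slope (leastConcaveMajorant a b F) y d :=
        (concaveOn_leastConcaveMajorant hM).le_slope_of_hasDerivWithinAt_Ioi_of_le
          (fun _ => le_leastConcaveMajorant hM) hFL hy' hd hy.1
          (Icc_mem_nhdsGT_of_mem ⟨hy'.1, hy.2⟩) hF.hasDerivAt.hasDerivWithinAt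
    _ < 0 := by
        rw [slope_def_field, leastConcaveMajorant_eq_of_eq_max hM hd hFd, ← hFL]
        exact div_neg_of_pos_of_neg (by linarith) (by linarith [hy.1])

end LeastConcaveMajorant

theorem stmt7_general (a b : ℝ) (F : ℝ → ℝ)
    (hFdiff : ∀ x ∈ Set.Ioo a b, DifferentiableAt ℝ F x)
    (M : ℝ) (hM : ∀ x ∈ Set.Icc a b, F x ≤ M)
    (D : Set ℝ) (hD : D = {x ∈ Set.Icc a b | F x = M}) (hDne : D.Nonempty)
    (c1 c2 : ℝ) (hc1 : c1 = sInf D) (hc2 : c2 = sSup D) :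
    (∀ y ∈ Set.Ioo a c1, deriv F y ≤ 0 → F y ≠ leastConcaveMajorant a b F y) ∧
    (∀ y ∈ Set.Ioo c2 b, 0 ≤ deriv F y → F y ≠ leastConcaveMajorant a b F y) := by
  subst hD hc1 hc2
  obtain ⟨d, hd, hFd⟩ := hDne
  have hbdd : BddBelow {x ∈ Icc a b | F x = M} ∧ BddAbove {x ∈ Icc a b | F x = M} :=
    ⟨bddBelow_Icc.mono fun _ hx => hx.1, bddAbove_Icc.mono fun _ hx => hx.1⟩
  have hlt_max : ∀ y ∈ Icc a b, y ∉ {x ∈ Icc a b | F x = M} → F y < M :=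
    fun y hy hyD => (hM y hy).lt_of_ne fun h => hyD ⟨hy, h⟩
  refine ⟨fun y hy hderiv hFL => ?_, fun y hy hderiv hFL => ?_⟩
  · have hyd : y < d := hy.2.trans_le (csInf_le hbdd.1 ⟨hd, hFd⟩)
    have hyb : y < b := hyd.trans_le hd.2
    exact hderiv.not_gt (deriv_pos_of_eq_leastConcaveMajorant hM hd hFd ⟨hy.1, hyd⟩
      (hlt_max y ⟨hy.1.le, hyb.le⟩ fun hyD => hy.2.not_ge (csInf_le hbdd.1 hyD))
      (hFdiff y ⟨hy.1, hyb⟩) hFL)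
  · have hdy : d < y := (le_csSup hbdd.2 ⟨hd, hFd⟩).trans_lt hy.1
    have hay : a < y := hd.1.trans_lt hdy
    exact hderiv.not_gt (deriv_neg_of_eq_leastConcaveMajorant hM hd hFd ⟨hdy, hy.2⟩
      (hlt_max y ⟨hay.le, hy.2.le⟩ fun hyD => hy.1.not_ge (le_csSup hbdd.2 hyD))
      (hFdiff y ⟨hay, hy.2⟩) hFL)

theorem stmt7 (a b : ℝ) (hab : a < b) (F : ℝ → ℝ)
    (hF : ContinuousOn F (Set.Icc a b))
    (hFdiff : ∀ x ∈ Set.Ioo a b, DifferentiableAt ℝ F x)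
    (M : ℝ) (hM : ∀ x ∈ Set.Icc a b, F x ≤ M)
    (D : Set ℝ) (hD : D = {x ∈ Set.Icc a b | F x = M}) (hDne : D.Nonempty)
    (c1 c2 : ℝ) (hc1 : c1 = sInf D) (hc2 : c2 = sSup D) :
    (∀ y ∈ Set.Ioo a c1, deriv F y ≤ 0 → F y ≠ leastConcaveMajorant a b F y) ∧
    (∀ y ∈ Set.Ioo c2 b, 0 ≤ deriv F y → F y ≠ leastConcaveMajorant a b F y) :=
  stmt7_general a b F hFdiff M hM D hD hDne c1 c2 hc1 hc2
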